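/- arXiv:1105.1745 — 2 statements merged into one kernel-verified Lean document; each statement's English description precedes it below -/
import Mathlib

section
/- Let X be a random variable with values in a finite set of codewords, and for each multi-index i = (i_0,…,i_{N−1}) with ∑ i_j = j define the multinomial coefficient b_i = j!/(i_0!⋯i_{N−1}!). For a code C of size M with codewords in {−1,1}^N, ∑_{i ∈ I_j} b_i · (∑_{c∈C} ∏_{k} c_k^{i_k})² = M · ∑_{k=0}^{N} (N−2k)^j · W_k°, where W_k° is the distance distribution W_k° = |{(c',c'') ∈ C×C : d(c',c'') = k}|/M and d is Hamming distance. -/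
/-!
Squaring the inner sum and applying the multinomial theorem turns the left side into
`∑_{(c, c') ∈ C × C} ⟨c, c'⟩ ^ j`. For `±1` vectors `⟨c, c'⟩ = N - 2 d(c, c')`, and grouping the
pairs by their Hamming distance gives the right side.
-/

open Finset

theorem Finset.sum_comp_eq_sum_card_filter_nsmul {α β M : Type*} [AddCommMonoid M]
    [DecidableEq β] {s : Finset α} {t : Finset β} {g : α → β} (hg : ∀ a ∈ s, g a ∈ t) (f : β → M) :
    ∑ a ∈ s, f (g a) = ∑ b ∈ t, #{a ∈ s | g a = b} • f b := by
  rw [← sum_fiberwise_of_maps_to hg]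
  refine sum_congr rfl fun b _ => ?_
  rw [← sum_const]
  exact sum_congr rfl fun a ha => by rw [(mem_filter.mp ha).2]

theorem sum_multinomial_mul_sq_sum_prod_pow {ι R : Type*} [Fintype ι] [DecidableEq ι]
    [CommSemiring R] (C : Finset (ι → R)) (j : ℕ) :
    ∑ i ∈ piAntidiag univ j, (Nat.multinomial univ i : R) * (∑ c ∈ C, ∏ k, c k ^ i k) ^ 2
      = ∑ p ∈ C ×ˢ C, (∑ k, p.1 k * p.2 k) ^ j := by
  have hsq : ∀ i : ι → ℕ, (∑ c ∈ C, ∏ k, c k ^ i k) ^ 2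
      = ∑ p ∈ C ×ˢ C, ∏ k, (p.1 k * p.2 k) ^ i k := fun i => by
    simp_rw [sq, sum_mul_sum, ← sum_product', ← prod_mul_distrib, mul_pow]
  simp_rw [hsq, sum_pow_eq_sum_piAntidiag, mul_sum]
  exact sum_comm

theorem sum_mul_eq_card_sub_two_mul_hammingDist {ι R : Type*} [Fintype ι] [CommRing R]
    [DecidableEq R] [CharZero R] {x y : ι → R} (hx : ∀ k, x k = 1 ∨ x k = -1)
    (hy : ∀ k, y k = 1 ∨ y k = -1) :
    ∑ k, x k * y k = Fintype.card ι - 2 * hammingDist x y := by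
  have hxy : ∀ k, x k * y k = 1 - 2 * if x k ≠ y k then 1 else 0 := by
    intro k
    rcases hx k with h | h <;> rcases hy k with h' | h' <;> norm_num [h, h']
  simp_rw [hxy, sum_sub_distrib, ← mul_sum, sum_boole, sum_const, card_univ, nsmul_one]
  rfl

theorem stmt_11_general (N j M : ℕ) (C : Finset (Fin N → ℝ)) (hM : C.card = M)
    (hval : ∀ c ∈ C, ∀ k, c k = 1 ∨ c k = -1) :
    ∑ i ∈ Finset.Nat.antidiagonalTuple N j,
        (Nat.multinomial Finset.univ i : ℝ) * (∑ c ∈ C, ∏ k, (c k) ^ (i k)) ^ 2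
      = (M : ℝ) * ∑ k ∈ Finset.range (N + 1),
          ((N : ℝ) - 2 * k) ^ j *
            (((C ×ˢ C).filter fun p =>
                (Finset.univ.filter fun i => p.1 i ≠ p.2 i).card = k).card / (M : ℝ)) := by
  have hinner : ∀ p ∈ C ×ˢ C,
      (∑ k, p.1 k * p.2 k) ^ j = ((N : ℝ) - 2 * hammingDist p.1 p.2) ^ j := fun p hp => by
    rw [mem_product] at hp
    rw [sum_mul_eq_card_sub_two_mul_hammingDist (hval _ hp.1) (hval _ hp.2), Fintype.card_fin]
  have hdist : ∀ p ∈ C ×ˢ C, hammingDist p.1 p.2 ∈ range (N + 1) :=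
    fun p _ => mem_range_succ_iff.mpr (hammingDist_le_card_fintype.trans (Fintype.card_fin N).le)
  rw [← piAntidiag_univ_fin_eq_antidiagonalTuple, sum_multinomial_mul_sq_sum_prod_pow,
    sum_congr rfl hinner,
    sum_comp_eq_sum_card_filter_nsmul hdist (fun d => ((N : ℝ) - 2 * d) ^ j), mul_sum]
  refine sum_congr rfl fun k _ => ?_
  rw [nsmul_eq_mul, mul_comm, mul_left_comm, mul_div_cancel_of_imp']
  · rfl -- `hammingDist` unfolds to the filter in the statement
  · -- for `M = 0` the code is empty, so the junk value of `x / 0` does not matter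
    intro hM0
    rw [← hM, Nat.cast_eq_zero, card_eq_zero] at hM0
    simp [hM0]

theorem stmt_11 (N j M : ℕ) (C : Finset (Fin N → ℝ)) (hM : C.card = M) (hMpos : 0 < M)
    (hval : ∀ c ∈ C, ∀ k, c k = 1 ∨ c k = -1) :
    ∑ i ∈ Finset.Nat.antidiagonalTuple N j,
        (Nat.multinomial Finset.univ i : ℝ) * (∑ c ∈ C, ∏ k, (c k) ^ (i k)) ^ 2
      = (M : ℝ) * ∑ k ∈ Finset.range (N + 1),
          ((N : ℝ) - 2 * k) ^ j *
            (((C ×ˢ C).filter fun p =>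
                (Finset.univ.filter fun i => p.1 i ≠ p.2 i).card = k).card / (M : ℝ)) :=
  stmt_11_general N j M C hM hval
end

section
/- Suppose for all k, W_k° ≤ (1+C_w)·2^{−(N−k_b)}·C(N,k), and suppose B(x) ≤ min over ρ>0 of ∑_k f(ρ,x)·W_k°·cosh(ρ(N−2k))/2^{k_b} where f(ρ,x) = 2LNK·exp(−ρ√N·x/c). Then, choosing ρ = x/(c√N), B(x) ≤ 2(1+C_w)·LNK·exp(−x²/(2c²)). -/
lemma cosh_binom_sum (N : ℕ) (ρ : ℝ) :
    ∑ k ∈ Finset.range (N + 1), (N.choose k : ℝ) * Real.cosh (ρ * ((N : ℝ) - 2 * k))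
      = (2 * Real.cosh ρ) ^ N := by
  have h1 : (Real.exp (-ρ) + Real.exp ρ) ^ N
      = ∑ k ∈ Finset.range (N + 1),
          Real.exp (-ρ) ^ k * Real.exp ρ ^ (N - k) * (N.choose k : ℝ) := add_pow _ _ _
  have h2 : (Real.exp ρ + Real.exp (-ρ)) ^ N
      = ∑ k ∈ Finset.range (N + 1),
          Real.exp ρ ^ k * Real.exp (-ρ) ^ (N - k) * (N.choose k : ℝ) := add_pow _ _ _
  have key : (2 * Real.cosh ρ) ^ N
      = ((Real.exp (-ρ) + Real.exp ρ) ^ N + (Real.exp ρ + Real.exp (-ρ)) ^ N) / 2 := by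
    rw [Real.cosh_eq]
    ring_nf
  rw [key, h1, h2, ← Finset.sum_add_distrib, Finset.sum_div]
  apply Finset.sum_congr rfl
  intro k hk
  have hkN : k ≤ N := Nat.lt_succ_iff.mp (Finset.mem_range.mp hk)
  rw [Real.cosh_eq, ← Real.exp_nat_mul, ← Real.exp_nat_mul, ← Real.exp_nat_mul,
    ← Real.exp_nat_mul, ← Real.exp_add, ← Real.exp_add]
  have hcast : ((N - k : ℕ) : ℝ) = (N : ℝ) - k := Nat.cast_sub hkN
  rw [hcast]
  have e1 : (k : ℝ) * -ρ + ((N : ℝ) - k) * ρ = ρ * ((N : ℝ) - 2 * k) := by ring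
  have e2 : (k : ℝ) * ρ + ((N : ℝ) - k) * -ρ = -(ρ * ((N : ℝ) - 2 * k)) := by ring
  rw [e1, e2]
  ring

theorem stmt_14 (N L K kb : ℕ) (hN : 0 < N) (hL : 0 < L) (hK : 0 < K) (hkb : kb ≤ N)
    (c Cw x B : ℝ) (hc : 0 < c) (hCw : 0 ≤ Cw) (hx : 0 < x)
    (W : ℕ → ℝ) (hWnonneg : ∀ k, 0 ≤ W k)
    (hW : ∀ k, W k ≤ (1 + Cw) * 2 ^ (-((N : ℝ) - kb)) * (N.choose k : ℝ))
    (hB : ∀ ρ : ℝ, 0 < ρ →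
      B ≤ ∑ k ∈ Finset.range (N + 1),
            (2 * L * N * K * Real.exp (-(ρ * Real.sqrt N * x) / c)) * W k *
              Real.cosh (ρ * ((N : ℝ) - 2 * k)) / 2 ^ kb) :
    B ≤ 2 * (1 + Cw) * L * N * K * Real.exp (-(x ^ 2) / (2 * c ^ 2)) := by
  have hNR : (0 : ℝ) < N := by exact_mod_cast hN
  have hsq : (0 : ℝ) < Real.sqrt N := Real.sqrt_pos.mpr hNR
  set ρ : ℝ := x / (c * Real.sqrt N) with hρdef
  have hρ : 0 < ρ := div_pos hx (mul_pos hc hsq)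
  have hf : (0 : ℝ) ≤ 2 * L * N * K * Real.exp (-(ρ * Real.sqrt N * x) / c) := by
    positivity
  have hkbpos : (0 : ℝ) < (2 : ℝ) ^ kb := by positivity
  have hsum : ∑ k ∈ Finset.range (N + 1),
      (2 * L * N * K * Real.exp (-(ρ * Real.sqrt N * x) / c)) * W k *
        Real.cosh (ρ * ((N : ℝ) - 2 * k)) / 2 ^ kb
      ≤ (2 * L * N * K * Real.exp (-(ρ * Real.sqrt N * x) / c)) *
          ((1 + Cw) * ((2 : ℝ) ^ (-((N : ℝ) - kb)) / 2 ^ kb)) *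
          ∑ k ∈ Finset.range (N + 1),
            (N.choose k : ℝ) * Real.cosh (ρ * ((N : ℝ) - 2 * k)) := by
    rw [Finset.mul_sum]
    apply Finset.sum_le_sum
    intro k _
    have hcosh : 0 ≤ Real.cosh (ρ * ((N : ℝ) - 2 * k)) := (Real.cosh_pos _).le
    have h1 : 2 * (L:ℝ) * N * K * Real.exp (-(ρ * Real.sqrt N * x) / c) * W k *
          Real.cosh (ρ * ((N:ℝ) - 2 * k))
        ≤ 2 * (L:ℝ) * N * K * Real.exp (-(ρ * Real.sqrt N * x) / c) *
          ((1 + Cw) * 2 ^ (-((N : ℝ) - kb)) * (N.choose k : ℝ)) *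
          Real.cosh (ρ * ((N:ℝ) - 2 * k)) := by
      apply mul_le_mul_of_nonneg_right _ hcosh
      exact mul_le_mul_of_nonneg_left (hW k) hf
    calc 2 * (L:ℝ) * N * K * Real.exp (-(ρ * Real.sqrt N * x) / c) * W k *
          Real.cosh (ρ * ((N:ℝ) - 2 * k)) / 2 ^ kb
        ≤ 2 * (L:ℝ) * N * K * Real.exp (-(ρ * Real.sqrt N * x) / c) *
          ((1 + Cw) * 2 ^ (-((N : ℝ) - kb)) * (N.choose k : ℝ)) *
          Real.cosh (ρ * ((N:ℝ) - 2 * k)) / 2 ^ kb := by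
          gcongr
      _ = _ := by field_simp
  have hB' := (hB ρ hρ).trans hsum
  rw [cosh_binom_sum] at hB'
  -- simplify the powers of two
  have hpowid : (2 : ℝ) ^ (-((N : ℝ) - kb)) / 2 ^ kb * (2 * Real.cosh ρ) ^ N
      = Real.cosh ρ ^ N := by
    rw [mul_pow]
    have h2 : ((2 : ℝ) ^ kb : ℝ) = (2 : ℝ) ^ (kb : ℝ) := (Real.rpow_natCast 2 kb).symm
    have h2N : ((2 : ℝ) ^ N : ℝ) = (2 : ℝ) ^ (N : ℝ) := (Real.rpow_natCast 2 N).symm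
    rw [h2, h2N]
    have key : (2:ℝ) ^ (-((N:ℝ)-kb)) / (2:ℝ)^(kb:ℝ) * (2:ℝ)^(N:ℝ) = 1 := by
      rw [div_mul_eq_mul_div, ← Real.rpow_add two_pos, ← Real.rpow_sub two_pos]
      have e : -((N:ℝ) - kb) + N - kb = 0 := by ring
      rw [e, Real.rpow_zero]
    calc (2:ℝ) ^ (-((N:ℝ)-kb)) / (2:ℝ)^(kb:ℝ) * ((2:ℝ)^(N:ℝ) * Real.cosh ρ ^ N)
        = ((2:ℝ) ^ (-((N:ℝ)-kb)) / (2:ℝ)^(kb:ℝ) * (2:ℝ)^(N:ℝ)) * Real.cosh ρ ^ N := by ring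
      _ = Real.cosh ρ ^ N := by rw [key, one_mul]
  have hB'' : B ≤ 2 * (L:ℝ) * N * K * Real.exp (-(ρ * Real.sqrt N * x) / c) *
      (1 + Cw) * Real.cosh ρ ^ N := by
    calc B ≤ _ := hB'
      _ = 2 * (L:ℝ) * N * K * Real.exp (-(ρ * Real.sqrt N * x) / c) * (1 + Cw) *
          ((2 : ℝ) ^ (-((N : ℝ) - kb)) / 2 ^ kb * (2 * Real.cosh ρ) ^ N) := by ring
      _ = _ := by rw [hpowid]
  have hcoshpow : Real.cosh ρ ^ N ≤ Real.exp ((N:ℝ) * (ρ ^ 2 / 2)) := by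
    calc Real.cosh ρ ^ N ≤ Real.exp (ρ ^ 2 / 2) ^ N :=
          pow_le_pow_left₀ (Real.cosh_pos ρ).le (Real.cosh_le_exp_half_sq ρ) N
      _ = Real.exp ((N:ℝ) * (ρ ^ 2 / 2)) := by rw [← Real.exp_nat_mul]
  -- arithmetic of exponents
  have hs : Real.sqrt N * Real.sqrt N = N := Real.mul_self_sqrt hNR.le
  have hrsN : ρ * Real.sqrt N = x / c := by
    rw [hρdef]; field_simp
  have hrsq : (N:ℝ) * (ρ ^ 2 / 2) = x ^ 2 / (2 * c ^ 2) := by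
    rw [hρdef, div_pow, mul_pow, Real.sq_sqrt hNR.le]
    field_simp
  have hexpcomb : Real.exp (-(ρ * Real.sqrt N * x) / c) * Real.exp ((N:ℝ) * (ρ ^ 2 / 2))
      = Real.exp (-(x ^ 2) / (2 * c ^ 2)) := by
    rw [← Real.exp_add, hrsN, hrsq]
    congr 1
    field_simp
    ring
  calc B ≤ 2 * (L:ℝ) * N * K * Real.exp (-(ρ * Real.sqrt N * x) / c) *
        (1 + Cw) * Real.cosh ρ ^ N := hB''
    _ ≤ 2 * (L:ℝ) * N * K * Real.exp (-(ρ * Real.sqrt N * x) / c) *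
        (1 + Cw) * Real.exp ((N:ℝ) * (ρ ^ 2 / 2)) := by
        apply mul_le_mul_of_nonneg_left hcoshpow
        have h1Cw : (0:ℝ) ≤ 1 + Cw := by linarith
        positivity
    _ = 2 * (1 + Cw) * L * N * K *
        (Real.exp (-(ρ * Real.sqrt N * x) / c) * Real.exp ((N:ℝ) * (ρ ^ 2 / 2))) := by ring
    _ = _ := by rw [hexpcomb]
end
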